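/- Let x be a fixed vector in R^n and let e1, e2 be independent zero-mean random vectors in R^n, with noisy observations y1 = x + e1 and y2 = x + e2, where e2 is independent of y1. Then for any measurable function g: R^n -> R^n with E[||g(y1)||^2] < infinity, the expected squared error against the second noisy observation equals the expected squared error against the clean signal plus the noise variance: E[||y1 - g(y1) - y2||^2] = E[||y1 - g(y1) - x||^2] + E[||e2||^2]. -/

import Mathlib

open MeasureTheory ProbabilityTheory
open scoped InnerProductSpace

/-! Write `f = y1 - g(y1) - x = e1 - g(x + e1)`, so that `y1 - g(y1) - y2 = f - e2`. Expanding
`‖f - e2‖²` leaves the cross term `E⟪f, e2⟫`, and since `f` is a function of `e1` it is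
independent of `e2`, whence `E⟪f, e2⟫ = ⟪E f, E e2⟫ = 0`. -/

section InnerProduct

variable {Ω E : Type*} [MeasurableSpace Ω] {μ : Measure Ω}
  [NormedAddCommGroup E] [InnerProductSpace ℝ E] [CompleteSpace E]
  [MeasurableSpace E] [BorelSpace E]

theorem ProbabilityTheory.IndepFun.integral_inner_eq_inner_integral {X Y : Ω → E}
    (hXY : IndepFun X Y μ) (hX : Integrable X μ) (hY : Integrable Y μ) :
    ∫ ω, ⟪X ω, Y ω⟫_ℝ ∂μ = ⟪∫ ω, X ω ∂μ, ∫ ω, Y ω ∂μ⟫_ℝ :=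
  hXY.integral_bilin hX hY (innerSL ℝ)

theorem ProbabilityTheory.IndepFun.integral_norm_sub_sq_of_integral_eq_zero
    [IsFiniteMeasure μ] {X Y : Ω → E} (hXY : IndepFun X Y μ)
    (hX : MemLp X 2 μ) (hY : MemLp Y 2 μ) (hY0 : ∫ ω, Y ω ∂μ = 0) :
    ∫ ω, ‖X ω - Y ω‖ ^ 2 ∂μ = ∫ ω, ‖X ω‖ ^ 2 ∂μ + ∫ ω, ‖Y ω‖ ^ 2 ∂μ := by
  have hX1 := hX.integrable one_le_two
  have hY1 := hY.integrable one_le_two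
  have hcross : Integrable (fun ω ↦ 2 * ⟪X ω, Y ω⟫_ℝ) μ :=
    (hXY.integrable_bilin hX1 hY1 (innerSL ℝ)).const_mul 2
  have hcross0 : ∫ ω, 2 * ⟪X ω, Y ω⟫_ℝ ∂μ = 0 := by
    rw [integral_const_mul, hXY.integral_inner_eq_inner_integral hX1 hY1, hY0, inner_zero_right,
      mul_zero]
  have hdiff : Integrable (fun ω ↦ ‖X ω‖ ^ 2 - 2 * ⟪X ω, Y ω⟫_ℝ) μ :=
    hX.norm.integrable_sq.sub hcross
  simp_rw [norm_sub_sq_real]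
  rw [integral_add hdiff hY.norm.integrable_sq, integral_sub hX.norm.integrable_sq hcross,
    hcross0, sub_zero]

end InnerProduct

/-- Noise-to-noise identity: the expected squared error against a second independent
zero-mean noisy observation equals the expected squared error against the clean signal
plus the noise variance. -/
theorem noise2noise_identity {Ω : Type*} [MeasurableSpace Ω] {μ : Measure Ω}
    [IsProbabilityMeasure μ] {n : ℕ} (x : EuclideanSpace ℝ (Fin n))
    (e1 e2 : Ω → EuclideanSpace ℝ (Fin n))
    (he1 : MemLp e1 2 μ) (he2 : MemLp e2 2 μ)
    (hindep : ProbabilityTheory.IndepFun e1 e2 μ)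
    (hmean2 : ∫ ω, e2 ω ∂μ = 0)
    (y1 y2 : Ω → EuclideanSpace ℝ (Fin n))
    (hy1 : y1 = fun ω => x + e1 ω) (hy2 : y2 = fun ω => x + e2 ω)
    (g : EuclideanSpace ℝ (Fin n) → EuclideanSpace ℝ (Fin n))
    (hg : Measurable g) (hg2 : MemLp (fun ω => g (y1 ω)) 2 μ) :
    ∫ ω, ‖y1 ω - g (y1 ω) - y2 ω‖ ^ 2 ∂μ
      = (∫ ω, ‖y1 ω - g (y1 ω) - x‖ ^ 2 ∂μ) + ∫ ω, ‖e2 ω‖ ^ 2 ∂μ := by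
  subst hy1 hy2
  set f : Ω → EuclideanSpace ℝ (Fin n) := fun ω ↦ x + e1 ω - g (x + e1 ω) - x
  have hf : MemLp f 2 μ :=
    (he1.sub hg2).ae_eq (ae_of_all _ fun ω ↦ by simp only [f, Pi.sub_apply]; abel)
  have hf_indep : IndepFun f e2 μ :=
    hindep.comp (φ := fun v ↦ x + v - g (x + v) - x) (by fun_prop) measurable_id
  have hsplit : ∀ ω, x + e1 ω - g (x + e1 ω) - (x + e2 ω) = f ω - e2 ω := fun ω ↦ by
    simp only [f]
    abel
  simp_rw [hsplit]
  exact hf_indep.integral_norm_sub_sq_of_integral_eq_zero hf he2 hmean2
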